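/- Monotone velocity for weak interaction: let 1 < y ≤ 2 and A > 0, and define ν(ρ) = A·(1−ρ)·z(1−ρ)/ρ for 0 < ρ < 1, where z(u) = 1 − (1 − √(1 − 4·u·(1−u)·(1 − 1/y))) / (2·(1−u)·(1 − 1/y)). Then ν is strictly decreasing on (0, 1); in particular it has no interior maximum, so the non-monotonic trend of the average ant velocity does not occur for y ≤ 2. -/

import Mathlib

/-- The fugacity at particle density `u` and interaction strength `y`:
`z(u) = 1 − (1 − √(1 − 4u(1−u)(1−1/y)))/(2(1−u)(1−1/y))`. -/
noncomputable def zfun (y u : ℝ) : ℝ :=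
  1 - (1 - Real.sqrt (1 - 4 * u * (1 - u) * (1 - 1 / y))) / (2 * (1 - u) * (1 - 1 / y))

/-- The stationary ant velocity at ant density `ρ`:
`ν(ρ) = A·(1−ρ)·z(1−ρ)/ρ`. -/
noncomputable def antVel (A y ρ : ℝ) : ℝ :=
  A * (1 - ρ) * zfun y (1 - ρ) / ρ

lemma zfun_facts (y u : ℝ) (hy1 : 1 < y) (hy2 : y ≤ 2) (hu0 : 0 < u) (hu1 : u < 1) :
    ∃ s : ℝ, 0 < s ∧ s ^ 2 = 1 - 4 * u * (1 - u) * (1 - 1 / y) ∧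
      zfun y u = 1 - 2 * u / (1 + s) ∧ 0 < zfun y u ∧
      y * (u * zfun y u) =
        (1 - u) * (1 + (y - 2) * zfun y u - (y - 1) * (zfun y u) ^ 2) := by
  have hy0 : (0:ℝ) < y := by linarith
  have hyy : y * (1 / y) = 1 := by field_simp
  have ha0 : 0 < 1 - 1 / y := by
    have : 1 / y < 1 := by rw [div_lt_one hy0]; exact hy1
    linarith
  have ha2 : 1 - 1 / y ≤ 1 / 2 := by
    have : (1:ℝ) / 2 ≤ 1 / y := by
      apply div_le_div_of_nonneg_left (by norm_num) hy0 hy2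
    linarith
  have ha1 : 1 - 1 / y < 1 := by
    have : 0 < 1 / y := by positivity
    linarith
  have h4 : 4 * u * (1 - u) ≤ 1 := by nlinarith [sq_nonneg (2 * u - 1)]
  have h4' : 0 < 4 * u * (1 - u) := by nlinarith
  have hD : (0:ℝ) < 1 - 4 * u * (1 - u) * (1 - 1 / y) := by
    have := mul_le_mul h4 ha2 ha0.le (by norm_num)
    linarith
  set s := Real.sqrt (1 - 4 * u * (1 - u) * (1 - 1 / y)) with hsdef
  have hs0 : 0 < s := Real.sqrt_pos.2 hD
  have hs2 : s ^ 2 = 1 - 4 * u * (1 - u) * (1 - 1 / y) := Real.sq_sqrt hD.le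
  have h1s : (0:ℝ) < 1 + s := by linarith
  have hden : 2 * (1 - u) * (1 - 1 / y) ≠ 0 := ne_of_gt (mul_pos (by nlinarith) ha0)
  have hz : zfun y u = 1 - 2 * u / (1 + s) := by
    unfold zfun
    rw [← hsdef]
    congr 1
    rw [div_eq_div_iff hden (ne_of_gt h1s)]
    linear_combination -hs2
  have hp : 0 < 4 * u * (1 - u) * (1 / y) := by positivity
  have hznum : 1 + s - 2 * u > 0 := by nlinarith [hs2, hp, hs0]
  have hzpos : 0 < zfun y u := by
    rw [hz, sub_pos, div_lt_one h1s]
    linarith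
  refine ⟨s, hs0, hs2, hz, hzpos, ?_⟩
  have hs2y : y * s ^ 2 = y - 4 * u * (1 - u) * (y - 1) := by
    linear_combination y * hs2 + (4 * u * (1 - u)) * hyy
  have hw : 1 - zfun y u = 2 * u / (1 + s) := by rw [hz]; ring
  have hH2 : (1 - zfun y u) ^ 2 * (1 - u) * (y - 1)
      = y * (1 - zfun y u) - y * u := by
    rw [hw]
    field_simp
    linear_combination hs2y
  linear_combination hH2

set_option maxHeartbeats 1000000 in
/-- monotone velocity for weak interaction. For `1 < y ≤ 2`
the ant velocity `ν(ρ) = A·(1−ρ)·z(1−ρ)/ρ` is strictly decreasing on `(0,1)`,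
so no interior maximum (non-monotonic trend) occurs. -/
theorem antVelocity_monotone_weak_interaction (y A : ℝ)
    (hy1 : 1 < y) (hy2 : y ≤ 2) (hA : 0 < A) :
    StrictAntiOn (antVel A y) (Set.Ioo 0 1) := by
  intro ρ1 h1 ρ2 h2 hlt
  obtain ⟨hρ10, hρ11⟩ := h1
  obtain ⟨hρ20, hρ21⟩ := h2
  have hy0 : (0:ℝ) < y := by linarith
  have ha2 : 1 - 1 / y ≤ 1 / 2 := by
    have : (1:ℝ) / 2 ≤ 1 / y := by
      apply div_le_div_of_nonneg_left (by norm_num) hy0 hy2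
    linarith
  obtain ⟨s1, hs10, hs12, hz1, hz1pos, hid1⟩ :=
    zfun_facts y (1 - ρ1) hy1 hy2 (by linarith) (by linarith)
  obtain ⟨s2, hs20, hs22, hz2, hz2pos, hid2⟩ :=
    zfun_facts y (1 - ρ2) hy1 hy2 (by linarith) (by linarith)
  set z1 := zfun y (1 - ρ1) with hz1def
  set z2 := zfun y (1 - ρ2) with hz2def
  clear_value z1 z2
  set u1 := 1 - ρ1 with hu1def
  set u2 := 1 - ρ2 with hu2def
  clear_value u1 u2
  have hu10 : 0 < u1 := by rw [hu1def]; linarith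
  have hu11 : u1 < 1 := by rw [hu1def]; linarith
  have hu20 : 0 < u2 := by rw [hu2def]; linarith
  have hu21 : u2 < 1 := by rw [hu2def]; linarith
  have hu21lt : u2 < u1 := by rw [hu1def, hu2def]; linarith
  have hkey : (u1 * s2) ^ 2 - (u2 * s1) ^ 2
      = (u1 - u2) * (u1 + u2 - 4 * (1 - 1 / y) * (u1 * u2)) := by
    rw [mul_pow, mul_pow, hs12, hs22]; ring
  have hmm : (0:ℝ) ≤ u1 * u2 := by positivity
  have h1 := mul_le_mul_of_nonneg_right ha2 hmm
  have hpos2 : 0 < u1 + u2 - 4 * (1 - 1 / y) * (u1 * u2) := by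
    nlinarith [mul_pos hu10 (by linarith : (0:ℝ) < 1 - u2)]
  have hprod := mul_pos (by linarith : (0:ℝ) < u1 - u2) hpos2
  have hsq : (u2 * s1) ^ 2 < (u1 * s2) ^ 2 := by linarith
  have hss : u2 * s1 < u1 * s2 := by
    by_contra h
    push_neg at h
    have h2 := pow_le_pow_left₀ (mul_nonneg hu10.le hs20.le) h 2
    linarith
  have hzlt : z1 < z2 := by
    rw [hz1, hz2]
    have hd1 : (0:ℝ) < 1 + s1 := by linarith
    have hd2 : (0:ℝ) < 1 + s2 := by linarith
    have : 2 * u2 / (1 + s2) < 2 * u1 / (1 + s1) := by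
      rw [div_lt_div_iff₀ hd2 hd1]
      nlinarith [hss]
    linarith
  have hv1 : antVel A y ρ1 = A * (1 + (y - 2) * z1 - (y - 1) * z1 ^ 2) / y := by
    unfold antVel
    rw [← hu1def, ← hz1def]
    rw [div_eq_div_iff (ne_of_gt hρ10) (ne_of_gt hy0)]
    have hρu : ρ1 = 1 - u1 := by rw [hu1def]; ring
    rw [hρu]
    linear_combination A * hid1
  have hv2 : antVel A y ρ2 = A * (1 + (y - 2) * z2 - (y - 1) * z2 ^ 2) / y := by
    unfold antVel
    rw [← hu2def, ← hz2def]
    rw [div_eq_div_iff (ne_of_gt hρ20) (ne_of_gt hy0)]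
    have hρu : ρ2 = 1 - u2 := by rw [hu2def]; ring
    rw [hρu]
    linear_combination A * hid2
  rw [hv1, hv2]
  have hfac : 0 < (z2 - z1) * ((2 - y) + (y - 1) * (z1 + z2)) := by
    apply mul_pos (by linarith)
    have : 0 < (y - 1) * (z1 + z2) := mul_pos (by linarith) (by linarith)
    linarith
  have hφ : A * (1 + (y - 2) * z2 - (y - 1) * z2 ^ 2)
      < A * (1 + (y - 2) * z1 - (y - 1) * z1 ^ 2) := by nlinarith [hfac, hA]
  exact (div_lt_div_iff_of_pos_right hy0).2 hφ
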